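/- Let X be an M × N complex matrix with unit-norm columns, Π ⊂ {1,…,N} with |Π| = K and complement Π^c, and suppose X satisfies: for a given vector z ∈ ℂ^K, ‖(X_Πᴴ X_Π − I_K)z‖_∞ ≤ ε‖z‖₂ and ‖X_{Π^c}ᴴ X_Π z‖_∞ ≤ ε‖z‖₂. Let y = X_Π z + w with ‖Xᴴ w‖_∞ ≤ τ. If ‖z‖_∞ − 2ε‖z‖₂ > 2τ, then max_{n ∈ Π} |x_nᴴ y| > max_{n ∉ Π} |x_nᴴ y|. -/

import Mathlib

/-!
Off the support, `x_nᴴ y` is the StOC-2 term plus the noise term, so `|x_nᴴ y| ≤ ε‖z‖₂ + τ`.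
On the support, at an index `j` where `|z_j| = ‖z‖_∞`, `x_jᴴ y` differs from `z_j` by the
StOC-1 term plus the noise term, so `|x_jᴴ y| ≥ ‖z‖_∞ - ε‖z‖₂ - τ`. The separation hypothesis
says exactly that the second bound exceeds the first.
-/

/-- Inner product between columns `n` and `m` of `X`. -/
noncomputable def colIP {M N : ℕ} (X : Matrix (Fin M) (Fin N) ℂ) (n m : Fin N) : ℂ :=
  ∑ i, (starRingEnd ℂ) (X i n) * X i m

/-- Correlation of column `n` of `X` with a vector `v`. -/
noncomputable def colDot {M N : ℕ} (X : Matrix (Fin M) (Fin N) ℂ) (n : Fin N)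
    (v : Fin M → ℂ) : ℂ :=
  ∑ i, (starRingEnd ℂ) (X i n) * v i

section colDot

variable {M N : ℕ} (X : Matrix (Fin M) (Fin N) ℂ) (n : Fin N)

lemma colDot_add (u v : Fin M → ℂ) : colDot X n (u + v) = colDot X n u + colDot X n v := by
  simp only [colDot, Pi.add_apply, mul_add, Finset.sum_add_distrib]

lemma colDot_sum_mul_cols {K : ℕ} (e : Fin K → Fin N) (z : Fin K → ℂ) :
    colDot X n (fun i => ∑ l, X i (e l) * z l) = ∑ l, colIP X n (e l) * z l := by
  simp only [colDot, colIP, Finset.mul_sum, Finset.sum_mul, mul_assoc]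
  exact Finset.sum_comm

end colDot

theorem support_identification_general {M N K : ℕ}
    (X : Matrix (Fin M) (Fin N) ℂ)
    (ε τ : ℝ)
    (e : Fin K → Fin N)
    (z : Fin K → ℂ) (w y : Fin M → ℂ)
    (hy : y = fun i => (∑ l, X i (e l) * z l) + w i)
    (hstoc1 : ∀ j : Fin K,
      ‖(∑ l, colIP X (e j) (e l) * z l) - z j‖ ≤
        ε * Real.sqrt (∑ l, ‖z l‖ ^ 2))
    (hstoc2 : ∀ n : Fin N, n ∉ Set.range e →
      ‖∑ l, colIP X n (e l) * z l‖ ≤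
        ε * Real.sqrt (∑ l, ‖z l‖ ^ 2))
    (hw : ∀ n : Fin N, ‖colDot X n w‖ ≤ τ)
    (hu : (Finset.univ : Finset (Fin K)).Nonempty)
    (hsep : Finset.sup' Finset.univ hu (fun j => ‖z j‖) -
        2 * ε * Real.sqrt (∑ l, ‖z l‖ ^ 2) > 2 * τ) :
    ∀ n : Fin N, n ∉ Set.range e →
      Finset.sup' Finset.univ hu (fun j => ‖colDot X (e j) y‖) >
        ‖colDot X n y‖ := by
  intro n hn
  set S := Real.sqrt (∑ l, ‖z l‖ ^ 2)
  have hcolDot (m : Fin N) : colDot X m y = (∑ l, colIP X m (e l) * z l) + colDot X m w := by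
    rw [hy, ← colDot_sum_mul_cols, ← colDot_add]
    rfl
  have hoff : ‖colDot X n y‖ ≤ ε * S + τ := by
    rw [hcolDot]
    exact (norm_add_le _ _).trans (add_le_add (hstoc2 n hn) (hw n))
  obtain ⟨j, -, hj⟩ := Finset.exists_mem_eq_sup' hu (fun j => ‖z j‖)
  have hon : ‖z j‖ ≤ ‖colDot X (e j) y‖ + (ε * S + τ) := by
    refine (norm_le_norm_add_norm_sub _ _).trans (add_le_add_right ?_ _)
    rw [hcolDot, add_sub_right_comm]
    exact (norm_add_le _ _).trans (add_le_add (hstoc1 j) (hw (e j)))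
  have hsup := Finset.le_sup' (fun j => ‖colDot X (e j) y‖) (Finset.mem_univ j)
  rw [hj] at hsep
  linarith

theorem support_identification {M N K : ℕ}
    (X : Matrix (Fin M) (Fin N) ℂ)
    (hnorm : ∀ n, ∑ i, ‖X i n‖ ^ 2 = 1)
    (ε τ : ℝ)
    (e : Fin K → Fin N) (he : Function.Injective e)
    (z : Fin K → ℂ) (w y : Fin M → ℂ)
    (hy : y = fun i => (∑ l, X i (e l) * z l) + w i)
    (hstoc1 : ∀ j : Fin K,
      ‖(∑ l, colIP X (e j) (e l) * z l) - z j‖ ≤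
        ε * Real.sqrt (∑ l, ‖z l‖ ^ 2))
    (hstoc2 : ∀ n : Fin N, n ∉ Set.range e →
      ‖∑ l, colIP X n (e l) * z l‖ ≤
        ε * Real.sqrt (∑ l, ‖z l‖ ^ 2))
    (hw : ∀ n : Fin N, ‖colDot X n w‖ ≤ τ)
    (hu : (Finset.univ : Finset (Fin K)).Nonempty)
    (hsep : Finset.sup' Finset.univ hu (fun j => ‖z j‖) -
        2 * ε * Real.sqrt (∑ l, ‖z l‖ ^ 2) > 2 * τ) :
    ∀ n : Fin N, n ∉ Set.range e →
      Finset.sup' Finset.univ hu (fun j => ‖colDot X (e j) y‖) >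
        ‖colDot X n y‖ :=
  support_identification_general X ε τ e z w y hy hstoc1 hstoc2 hw hu hsep
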